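/- Let k'/k be a finite extension of finite fields, G a finite group, and b' a block idempotent of k'G. Let Γ := Gal(k'/k) act on k'G by applying each field automorphism to the coefficients, and let S := stab_Γ(b') be the stabilizer of b'. Then the orbit sum tr(b') := Σ_{σ ∈ Γ/S} σ(b') (the sum of the elements of the Γ-orbit of b') lies in the image of the inclusion ι : kG → k'G, its preimage b̃ is a block idempotent of kG, and b̃ is the unique block idempotent of kG satisfying ι(b̃)·b' ≠ 0. -/

import Mathlib

noncomputable section Blocks
namespace GalDesc

variable {k k' : Type} [CommRing k] [CommRing k'] (G : Type) [Monoid G]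

/-- Applying a ring homomorphism `f : k →+* k'` to the coefficients of elements of the
monoid algebra `kG` gives a ring homomorphism `kG →+* k'G`, `Σ aₘ·m ↦ Σ f(aₘ)·m`. -/
def mapCoeffs (f : k →+* k') : MonoidAlgebra k G →+* MonoidAlgebra k' G :=
  MonoidAlgebra.liftNCRingHom (MonoidAlgebra.singleOneRingHom.comp f)
    (MonoidAlgebra.of k' G) (fun b a => by
      show MonoidAlgebra.single (1 : G) (f b) * MonoidAlgebra.single a (1 : k') =
        MonoidAlgebra.single a (1 : k') * MonoidAlgebra.single (1 : G) (f b)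
      rw [MonoidAlgebra.single_mul_single, MonoidAlgebra.single_mul_single,
        one_mul, mul_one, one_mul, mul_one])

lemma mapCoeffs_single (f : k →+* k') (g : G) (a : k) :
    mapCoeffs G f (MonoidAlgebra.single g a) = MonoidAlgebra.single g (f a) := by
  simp [mapCoeffs, MonoidAlgebra.liftNCRingHom, MonoidAlgebra.liftNC_single,
    MonoidAlgebra.single_mul_single]

/-- A block idempotent of `kG`: a primitive idempotent of the center, i.e. a nonzero
central idempotent which cannot be written as a sum of two nonzero orthogonal central
idempotents. -/
def IsBlockIdempotent (e : MonoidAlgebra k G) : Prop :=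
  e ∈ Subalgebra.center k (MonoidAlgebra k G) ∧ IsIdempotentElem e ∧ e ≠ 0 ∧
    ∀ f g : MonoidAlgebra k G,
      f ∈ Subalgebra.center k (MonoidAlgebra k G) →
      g ∈ Subalgebra.center k (MonoidAlgebra k G) →
      IsIdempotentElem f → IsIdempotentElem g → f ≠ 0 → g ≠ 0 →
      f * g = 0 → g * f = 0 → e ≠ f + g

end GalDesc
end Blocks

open GalDesc
open scoped Classical

section Aux

variable {k k' : Type} [CommRing k] [CommRing k'] (G : Type) [Monoid G]

lemma mapCoeffs_apply (f : k →+* k') (x : MonoidAlgebra k G) (g : G) :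
    (mapCoeffs G f x).coeff g = f (x.coeff g) := by
  have : (mapCoeffs G f x).coeff = Finsupp.mapRange f f.map_zero x.coeff := by
    induction x using MonoidAlgebra.induction_linear with
    | zero => simp
    | add a b ha hb => rw [map_add, MonoidAlgebra.coeff_add, MonoidAlgebra.coeff_add,
        Finsupp.mapRange_add f.map_add, ha, hb]
    | single g a => rw [mapCoeffs_single]; exact (Finsupp.mapRange_single).symm
  rw [this]; rfl

lemma mapCoeffs_injective (f : k →+* k') (hf : Function.Injective f) :
    Function.Injective (mapCoeffs G f) := by
  intro x y h
  ext g
  apply hf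
  rw [← mapCoeffs_apply G f, ← mapCoeffs_apply G f, h]

lemma mapCoeffs_center (f : k →+* k') (x : MonoidAlgebra k G)
    (hx : x ∈ Subalgebra.center k (MonoidAlgebra k G)) :
    mapCoeffs G f x ∈ Subalgebra.center k' (MonoidAlgebra k' G) := by
  rw [Subalgebra.mem_center_iff] at hx ⊢
  intro y
  induction y using MonoidAlgebra.induction_linear with
  | zero => simp
  | add a b ha hb => rw [add_mul, mul_add, ha, hb]
  | single g a =>
    have h1 : (MonoidAlgebra.single g a : MonoidAlgebra k' G) =
        MonoidAlgebra.single (1 : G) a * MonoidAlgebra.single g (1 : k') := by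
      rw [MonoidAlgebra.single_mul_single, one_mul, mul_one]
    have h2 : MonoidAlgebra.single g (1 : k') * mapCoeffs G f x =
        mapCoeffs G f x * MonoidAlgebra.single g (1 : k') := by
      have h3 := hx (MonoidAlgebra.single g (1 : k))
      have e1 : (MonoidAlgebra.single g (1 : k') : MonoidAlgebra k' G) =
          mapCoeffs G f (MonoidAlgebra.single g (1 : k)) := by
        rw [mapCoeffs_single, map_one]
      rw [e1, ← map_mul, ← map_mul, h3]
    show MonoidAlgebra.single g a * mapCoeffs G f x = mapCoeffs G f x * MonoidAlgebra.single g a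
    rw [h1, mul_assoc, h2, ← mul_assoc, MonoidAlgebra.single_one_comm, mul_assoc]

/-- If `e` is a block idempotent and `f` is a central idempotent with `e * f ≠ 0`,
then `e * f = e`. -/
lemma block_absorb (e f : MonoidAlgebra k G) (he : IsBlockIdempotent G e)
    (hfc : f ∈ Subalgebra.center k (MonoidAlgebra k G)) (hfid : IsIdempotentElem f)
    (hef : e * f ≠ 0) : e * f = e := by
  obtain ⟨hec, heid, hene, hemax⟩ := he
  by_contra hne
  have hsub : e - e * f ≠ 0 := fun h => hne (by linear_combination (norm := noncomm_ring) -h)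
  have hce : ∀ z, z * e = e * z := Subalgebra.mem_center_iff.mp hec
  have hcf : ∀ z, z * f = f * z := Subalgebra.mem_center_iff.mp hfc
  have heid' : e * e = e := heid
  have hfid' : f * f = f := hfid
  have hefe : e * f * e = e * f := by
    rw [hce (e * f), ← mul_assoc, heid']
  have hefid : IsIdempotentElem (e * f) := by
    show e * f * (e * f) = e * f
    rw [← mul_assoc, hefe, mul_assoc, hfid]
  have hsubid : IsIdempotentElem (e - e * f) := by
    show (e - e * f) * (e - e * f) = e - e * f
    rw [sub_mul, mul_sub, mul_sub, ← mul_assoc, heid', hefe, hefid.eq]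
    abel
  have ho1 : (e * f) * (e - e * f) = 0 := by
    rw [mul_sub, hefe, hefid.eq, sub_self]
  have ho2 : (e - e * f) * (e * f) = 0 := by
    rw [sub_mul, ← mul_assoc, heid', hefid.eq, sub_self]
  have hc1 : e * f ∈ Subalgebra.center k (MonoidAlgebra k G) := Subalgebra.mul_mem _ hec hfc
  have hc2 : e - e * f ∈ Subalgebra.center k (MonoidAlgebra k G) := Subalgebra.sub_mem _ hec hc1
  exact hemax (e * f) (e - e * f) hc1 hc2 hefid hsubid hef hsub ho1 ho2 (by abel)

/-- Distinct block idempotents are orthogonal. -/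
lemma block_orth (e f : MonoidAlgebra k G) (he : IsBlockIdempotent G e)
    (hf : IsBlockIdempotent G f) (hef : e * f ≠ 0) : e = f := by
  have hcomm : f * e = e * f := Subalgebra.mem_center_iff.mp he.1 f
  have h1 : e * f = e := block_absorb G e f he hf.1 hf.2.1 hef
  have h2 : f * e = f := block_absorb G f e hf he.1 he.2.1 (by rw [hcomm]; exact hef)
  rw [← h1, ← hcomm, h2]

/-- Being a block idempotent is preserved under applying a ring isomorphism to
the coefficients. -/
lemma block_map (f : k →+* k') (f' : k' →+* k) (h1 : ∀ a, f' (f a) = a)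
    (h2 : ∀ a, f (f' a) = a) (b : MonoidAlgebra k G) (hb : IsBlockIdempotent G b) :
    IsBlockIdempotent G (mapCoeffs G f b) := by
  have hid1 : ∀ x : MonoidAlgebra k G, mapCoeffs G f' (mapCoeffs G f x) = x := by
    intro x; ext m; simp [mapCoeffs_apply, h1]
  have hid2 : ∀ x : MonoidAlgebra k' G, mapCoeffs G f (mapCoeffs G f' x) = x := by
    intro x; ext m; simp [mapCoeffs_apply, h2]
  obtain ⟨hbc, hbid, hbne, hbmax⟩ := hb
  refine ⟨mapCoeffs_center G f b hbc, ?_, ?_, ?_⟩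
  · show mapCoeffs G f b * mapCoeffs G f b = mapCoeffs G f b
    rw [← map_mul, hbid]
  · intro h
    exact hbne (by rw [← hid1 b, h, map_zero])
  · intro p q hpc hqc hpid hqid hpne hqne hpq hqp heq
    refine hbmax (mapCoeffs G f' p) (mapCoeffs G f' q)
      (mapCoeffs_center G f' p hpc) (mapCoeffs_center G f' q hqc)
      ?_ ?_ ?_ ?_ ?_ ?_ ?_
    · show _ * _ = _
      rw [← map_mul, hpid]
    · show _ * _ = _
      rw [← map_mul, hqid]
    · intro h; exact hpne (by rw [← hid2 p, h, map_zero])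
    · intro h; exact hqne (by rw [← hid2 q, h, map_zero])
    · rw [← map_mul, hpq, map_zero]
    · rw [← map_mul, hqp, map_zero]
    · rw [← hid1 b, heq, map_add]

lemma mapCoeffs_range (f : k →+* k') (hf : Function.Injective f) (x : MonoidAlgebra k' G)
    (hx : ∀ g, x.coeff g ∈ Set.range f) : ∃ y, mapCoeffs G f y = x := by
  have hnek : Nonempty k := ⟨0⟩
  refine ⟨MonoidAlgebra.ofCoeff (Finsupp.mapRange (Function.invFun f) ?_ x.coeff), ?_⟩
  · apply hf
    rw [Function.invFun_eq ⟨0, f.map_zero⟩, f.map_zero]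
  · ext m
    rw [mapCoeffs_apply, MonoidAlgebra.coeff_ofCoeff, Finsupp.mapRange_apply]
    exact Function.invFun_eq (hx m)

end Aux

/-- **Statement 13.** Let `k'/k` be a finite extension of finite fields, `G` a finite group,
`b'` a block idempotent of `k'G`. The sum of the `Gal(k'/k)`-orbit of `b'` (equivalently,
`Σ_{σ ∈ Γ/stab(b')} σ(b')`) lies in the image of `ι : kG → k'G`; its preimage `b̃` is a
block idempotent of `kG`, and `b̃` is the unique block idempotent of `kG` with
`ι(b̃)·b' ≠ 0`. -/
theorem orbit_sum_is_block
    (k k' : Type) [Field k] [Field k'] [Finite k] [Finite k'] [Algebra k k']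
    [FiniteDimensional k k']
    (G : Type) [Group G] [Finite G]
    (b' : MonoidAlgebra k' G) (hb' : IsBlockIdempotent G b') :
    ∃ bt : MonoidAlgebra k G,
      mapCoeffs G (algebraMap k k') bt =
        ∑ x ∈ Finset.image (fun σ : k' ≃ₐ[k] k' => mapCoeffs G (σ : k' →+* k') b')
            Finset.univ, x ∧
      IsBlockIdempotent G bt ∧
      mapCoeffs G (algebraMap k k') bt * b' ≠ 0 ∧
      ∀ c : MonoidAlgebra k G, IsBlockIdempotent G c →
        mapCoeffs G (algebraMap k k') c * b' ≠ 0 → c = bt := by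
  classical
  set Φ : (k' ≃ₐ[k] k') → MonoidAlgebra k' G :=
    fun σ => mapCoeffs G (σ : k' →+* k') b' with hΦ
  set S : Finset (MonoidAlgebra k' G) := Finset.image Φ Finset.univ with hS
  set T : MonoidAlgebra k' G := ∑ x ∈ S, x with hT
  -- every element of the orbit is a block idempotent
  have hSblock : ∀ x ∈ S, IsBlockIdempotent G x := by
    intro x hx
    rw [hS, Finset.mem_image] at hx
    obtain ⟨σ, -, rfl⟩ := hx
    exact block_map G (σ : k' →+* k') (σ.symm : k' →+* k')
      (fun a => σ.symm_apply_apply a) (fun a => σ.apply_symm_apply a) b' hb'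
  -- b' itself is in the orbit
  have hb'S : b' ∈ S := by
    rw [hS, Finset.mem_image]
    refine ⟨AlgEquiv.refl, Finset.mem_univ _, ?_⟩
    ext m
    simp [hΦ, mapCoeffs_apply]
  -- orthogonality of distinct orbit elements
  have horth : ∀ x ∈ S, ∀ y ∈ S, x ≠ y → x * y = 0 := by
    intro x hx y hy hne
    by_contra h
    exact hne (block_orth G x y (hSblock x hx) (hSblock y hy) h)
  -- T absorbs each orbit element
  have habs : ∀ x ∈ S, T * x = x := by
    intro x hx
    rw [hT, Finset.sum_mul]
    rw [Finset.sum_eq_single_of_mem x hx (fun y hy hne => horth y hy x hx hne)]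
    exact (hSblock x hx).2.1
  have hTb' : T * b' = b' := habs b' hb'S
  have hTidem : IsIdempotentElem T := by
    show T * T = T
    rw [hT, Finset.mul_sum]
    exact Finset.sum_congr rfl (fun x hx => habs x hx)
  have hTne : T ≠ 0 := by
    intro h
    exact hb'.2.2.1 (by rw [← hTb', h, zero_mul])
  have hTcent : T ∈ Subalgebra.center k' (MonoidAlgebra k' G) := by
    rw [hT]
    exact Subalgebra.sum_mem _ (fun x hx => (hSblock x hx).1)
  -- T is fixed by every σ ∈ Gal(k'/k)
  have hPhi_comp : ∀ σ τ : k' ≃ₐ[k] k',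
      mapCoeffs G (σ : k' →+* k') (Φ τ) = Φ (τ.trans σ) := by
    intro σ τ
    ext m
    simp [hΦ, mapCoeffs_apply]
  have himage : ∀ σ : k' ≃ₐ[k] k',
      S.image (mapCoeffs G (σ : k' →+* k')) = S := by
    intro σ
    rw [hS, Finset.image_image]
    have h1 : (mapCoeffs G (σ : k' →+* k')) ∘ Φ = Φ ∘ (fun τ => τ.trans σ) :=
      funext fun τ => hPhi_comp σ τ
    rw [h1, ← Finset.image_image]
    congr 1
    apply Finset.eq_univ_of_forall
    intro τ
    rw [Finset.mem_image]
    exact ⟨τ.trans σ.symm, Finset.mem_univ _, by ext x; simp⟩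
  have hinj : ∀ σ : k' ≃ₐ[k] k',
      Function.Injective (mapCoeffs G (σ : k' →+* k')) := by
    intro σ
    exact mapCoeffs_injective G _ (fun a b h => by
      have : σ a = σ b := h
      exact σ.injective this)
  have hTfix : ∀ σ : k' ≃ₐ[k] k', mapCoeffs G (σ : k' →+* k') T = T := by
    intro σ
    calc mapCoeffs G (σ : k' →+* k') T = ∑ x ∈ S, mapCoeffs G (σ : k' →+* k') x := by
          rw [hT, map_sum]
      _ = ∑ x ∈ S.image (mapCoeffs G (σ : k' →+* k')), x := by
          rw [Finset.sum_image (fun x _ y _ h => hinj σ h)]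
      _ = T := by rw [himage σ, hT]
  -- coefficients of T lie in k
  have hcoef : ∀ m : G, T.coeff m ∈ Set.range (algebraMap k k') := by
    intro m
    have hfix : ∀ σ : k' ≃ₐ[k] k', σ (T.coeff m) = T.coeff m := by
      intro σ
      have h2 := congrArg (fun z : MonoidAlgebra k' G => z.coeff m) (hTfix σ)
      simpa [mapCoeffs_apply] using h2
    rw [← IntermediateField.mem_bot (F := k),
      ← IsGalois.fixedField_fixingSubgroup (⊥ : IntermediateField k k')]
    rintro ⟨σ, -⟩
    exact hfix σ
  obtain ⟨bt, hbt⟩ := mapCoeffs_range G (algebraMap k k') (algebraMap k k').injective T hcoef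
  have hιinj : Function.Injective (mapCoeffs G (algebraMap k k')) :=
    mapCoeffs_injective G _ (algebraMap k k').injective
  -- ι(z) is fixed by every σ
  have hfixι : ∀ (σ : k' ≃ₐ[k] k') (z : MonoidAlgebra k G),
      mapCoeffs G (σ : k' →+* k') (mapCoeffs G (algebraMap k k') z) =
        mapCoeffs G (algebraMap k k') z := by
    intro σ z
    ext m
    simp [mapCoeffs_apply]
  -- key: if ι(g) * b' = 0 and g = g * bt then g = 0
  have hkey : ∀ g : MonoidAlgebra k G, g = g * bt →
      mapCoeffs G (algebraMap k k') g * b' = 0 → g = 0 := by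
    intro g hg hgb
    have hgS : ∀ x ∈ S, mapCoeffs G (algebraMap k k') g * x = 0 := by
      intro x hx
      rw [hS, Finset.mem_image] at hx
      obtain ⟨σ, -, rfl⟩ := hx
      have := congrArg (mapCoeffs G (σ : k' →+* k')) hgb
      rw [map_mul, map_zero, hfixι σ g] at this
      exact this
    have hgT : mapCoeffs G (algebraMap k k') g * T = 0 := by
      rw [hT, Finset.mul_sum]
      exact Finset.sum_eq_zero hgS
    apply hιinj
    rw [map_zero]
    calc mapCoeffs G (algebraMap k k') g
        = mapCoeffs G (algebraMap k k') (g * bt) := by rw [← hg]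
      _ = mapCoeffs G (algebraMap k k') g * T := by rw [map_mul, hbt]
      _ = 0 := hgT
  -- bt is a block idempotent
  have hbtblock : IsBlockIdempotent G bt := by
    refine ⟨?_, ?_, ?_, ?_⟩
    · rw [Subalgebra.mem_center_iff]
      intro z
      apply hιinj
      rw [map_mul, map_mul, hbt]
      exact Subalgebra.mem_center_iff.mp hTcent _
    · show bt * bt = bt
      apply hιinj
      rw [map_mul, hbt]
      exact hTidem
    · intro h
      exact hTne (by rw [← hbt, h, map_zero])
    · intro p q hpc hqc hpid hqid hpne hqne hpq hqp heq
      set P : MonoidAlgebra k' G := mapCoeffs G (algebraMap k k') p with hP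
      set Q : MonoidAlgebra k' G := mapCoeffs G (algebraMap k k') q with hQ
      have hTPQ : T = P + Q := by rw [← hbt, heq, map_add]
      have hPc := mapCoeffs_center G (algebraMap k k') p hpc
      have hQc := mapCoeffs_center G (algebraMap k k') q hqc
      have hPcc : ∀ z, z * P = P * z := Subalgebra.mem_center_iff.mp hPc
      have hQcc : ∀ z, z * Q = Q * z := Subalgebra.mem_center_iff.mp hQc
      have hPid : P * P = P := by rw [hP, ← map_mul, hpid]
      have hQid : Q * Q = Q := by rw [hQ, ← map_mul, hqid]
      have hPQ : P * Q = 0 := by rw [hP, hQ, ← map_mul, hpq, map_zero]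
      have hQP : Q * P = 0 := by rw [hP, hQ, ← map_mul, hqp, map_zero]
      -- b' = P*b' + Q*b', a decomposition into orthogonal central idempotents
      have hsum : b' = P * b' + Q * b' := by
        rw [← add_mul, ← hTPQ, hTb']
      have hb'id := hb'.2.1
      have hb'cc : ∀ z, z * b' = b' * z := Subalgebra.mem_center_iff.mp hb'.1
      have hPb'id : (P * b') * (P * b') = P * b' := by
        calc (P * b') * (P * b') = P * (b' * P) * b' := by noncomm_ring
          _ = P * (P * b') * b' := by rw [hPcc b']
          _ = (P * P) * (b' * b') := by noncomm_ring
          _ = P * b' := by rw [hPid, hb'id]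
      have hQb'id : (Q * b') * (Q * b') = Q * b' := by
        calc (Q * b') * (Q * b') = Q * (b' * Q) * b' := by noncomm_ring
          _ = Q * (Q * b') * b' := by rw [hQcc b']
          _ = (Q * Q) * (b' * b') := by noncomm_ring
          _ = Q * b' := by rw [hQid, hb'id]
      have hPQb' : (P * b') * (Q * b') = 0 := by
        calc (P * b') * (Q * b') = P * (b' * Q) * b' := by noncomm_ring
          _ = P * (Q * b') * b' := by rw [hQcc b']
          _ = (P * Q) * (b' * b') := by noncomm_ring
          _ = 0 := by rw [hPQ, zero_mul]
      have hQPb' : (Q * b') * (P * b') = 0 := by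
        calc (Q * b') * (P * b') = Q * (b' * P) * b' := by noncomm_ring
          _ = Q * (P * b') * b' := by rw [hPcc b']
          _ = (Q * P) * (b' * b') := by noncomm_ring
          _ = 0 := by rw [hQP, zero_mul]
      have hPb'c : P * b' ∈ Subalgebra.center k' (MonoidAlgebra k' G) :=
        Subalgebra.mul_mem _ hPc hb'.1
      have hQb'c : Q * b' ∈ Subalgebra.center k' (MonoidAlgebra k' G) :=
        Subalgebra.mul_mem _ hQc hb'.1
      -- one of the two pieces vanishes
      have hcases : P * b' = 0 ∨ Q * b' = 0 := by
        by_contra h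
        push_neg at h
        exact hb'.2.2.2 (P * b') (Q * b') hPb'c hQb'c hPb'id hQb'id h.1 h.2
          hPQb' hQPb' hsum
      rcases hcases with h0 | h0
      · -- then p = 0
        refine hpne (hkey p ?_ ?_)
        · have : p * (p + q) = p := by
            rw [mul_add, hpid, hpq, add_zero]
          rw [heq, this]
        · rw [← hP]; exact h0
      · refine hqne (hkey q ?_ ?_)
        · have : q * (p + q) = q := by
            rw [mul_add, hqid, hqp, zero_add]
          rw [heq, this]
        · rw [← hQ]; exact h0
  refine ⟨bt, by rw [hbt], hbtblock, ?_, ?_⟩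
  · rw [hbt, hTb']
    exact hb'.2.2.1
  · intro c hc hcb
    apply block_orth G c bt hc hbtblock
    intro h
    apply hcb
    have h1 : mapCoeffs G (algebraMap k k') c * T = 0 := by
      rw [← hbt, ← map_mul, h, map_zero]
    calc mapCoeffs G (algebraMap k k') c * b'
        = mapCoeffs G (algebraMap k k') c * (T * b') := by rw [hTb']
      _ = (mapCoeffs G (algebraMap k k') c * T) * b' := by rw [mul_assoc]
      _ = 0 := by rw [h1, zero_mul]
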